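/- For r ≥ 7 with r ≡ ±1 (mod 8), one has #N_i^1 − #N_{i-2}^0 = #{(0,1,0,l4,l5) ∈ N_i} + #{(1,0,0,l4,l5) ∈ N_i}, where N_{i-2}^0 is empty if i < 2. -/
import Mathlib


/-- The set N_i of exponent tuples (l1,l2,l3,l4,l5). -/
def Nset (r i : ℕ) : Set (ℕ × ℕ × ℕ × ℕ × ℕ) :=
  {l | (r + 1) / 2 * l.1 + (r - 1) / 2 * l.2.1 + 2 * l.2.2.1 + l.2.2.2.1 + r * l.2.2.2.2 = i
    ∧ l.1 ≤ 1 ∧ l.2.1 ≤ 1}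

/-- The parity part N_i^j, where l1 + l2 + l3 ≡ j (mod 2). -/
def Npart (r i j : ℕ) : Set (ℕ × ℕ × ℕ × ℕ × ℕ) :=
  {l | l ∈ Nset r i ∧ (l.1 + l.2.1 + l.2.2.1) % 2 = j}

/-- Translation adding (0,0,1,0,0). -/
def shift3 (l : ℕ × ℕ × ℕ × ℕ × ℕ) : ℕ × ℕ × ℕ × ℕ × ℕ :=
  (l.1, l.2.1, l.2.2.1 + 1, l.2.2.2.1, l.2.2.2.2)

lemma shift3_inj : Function.Injective shift3 := by
  rintro ⟨a,b,c,d,e⟩ ⟨a',b',c',d',e'⟩ h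
  simp only [shift3, Prod.mk.injEq] at h
  obtain ⟨h1,h2,h3,h4,h5⟩ := h
  simp_all

lemma Nset_finite (r i : ℕ) (hr : 1 ≤ r) : (Nset r i).Finite := by
  apply Set.Finite.subset (Set.finite_Iic ((1,1,i,i,i) : ℕ×ℕ×ℕ×ℕ×ℕ))
  rintro ⟨a,b,c,d,e⟩ ⟨heq, ha, hb⟩
  dsimp only at heq ha hb
  have he : e ≤ r * e := Nat.le_mul_of_pos_left e hr
  simp only [Set.mem_Iic, Prod.le_def]
  revert heq he
  generalize (r+1)/2 * a = t1
  generalize (r-1)/2 * b = t2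
  generalize r * e = t5
  intro heq he
  omega

theorem stmt3 (r : ℕ) (hr : 7 ≤ r) (hmod : r % 8 = 1 ∨ r % 8 = 7) (i : ℕ) :
    (Npart r i 1).ncard =
      (if 2 ≤ i then (Npart r (i - 2) 0).ncard else 0) +
        {l ∈ Nset r i | l.1 = 0 ∧ l.2.1 = 1 ∧ l.2.2.1 = 0}.ncard +
        {l ∈ Nset r i | l.1 = 1 ∧ l.2.1 = 0 ∧ l.2.2.1 = 0}.ncard := by
  have hr1 : 1 ≤ r := by omega
  have hfinN := Nset_finite r i hr1
  have hfinA : {l ∈ Npart r i 1 | 1 ≤ l.2.2.1}.Finite :=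
    hfinN.subset (fun l hl => hl.1.1)
  have hfinB : {l ∈ Nset r i | l.1 = 0 ∧ l.2.1 = 1 ∧ l.2.2.1 = 0}.Finite :=
    hfinN.subset (fun l hl => hl.1)
  have hfinC : {l ∈ Nset r i | l.1 = 1 ∧ l.2.1 = 0 ∧ l.2.2.1 = 0}.Finite :=
    hfinN.subset (fun l hl => hl.1)
  have hsplit : Npart r i 1 = {l ∈ Npart r i 1 | 1 ≤ l.2.2.1} ∪
      ({l ∈ Nset r i | l.1 = 0 ∧ l.2.1 = 1 ∧ l.2.2.1 = 0} ∪
       {l ∈ Nset r i | l.1 = 1 ∧ l.2.1 = 0 ∧ l.2.2.1 = 0}) := by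
    ext ⟨a,b,c,d,e⟩
    simp only [Npart, Nset, Set.mem_setOf_eq, Set.mem_union, Set.mem_sep_iff]
    generalize (r+1)/2 * a = t1
    generalize (r-1)/2 * b = t2
    generalize r * e = t5
    omega
  have hd1 : Disjoint {l ∈ Npart r i 1 | 1 ≤ l.2.2.1}
      ({l ∈ Nset r i | l.1 = 0 ∧ l.2.1 = 1 ∧ l.2.2.1 = 0} ∪
       {l ∈ Nset r i | l.1 = 1 ∧ l.2.1 = 0 ∧ l.2.2.1 = 0}) := by
    rw [Set.disjoint_left]
    rintro l ⟨-, hc⟩ h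
    rcases h with ⟨-, -, -, h0⟩ | ⟨-, -, -, h0⟩ <;> omega
  have hd2 : Disjoint {l ∈ Nset r i | l.1 = 0 ∧ l.2.1 = 1 ∧ l.2.2.1 = 0}
      {l ∈ Nset r i | l.1 = 1 ∧ l.2.1 = 0 ∧ l.2.2.1 = 0} := by
    rw [Set.disjoint_left]
    rintro l ⟨-, h1, -⟩ ⟨-, h2, -⟩
    omega
  rw [hsplit, Set.ncard_union_eq hd1 hfinA (hfinB.union hfinC),
    Set.ncard_union_eq hd2 hfinB hfinC]
  have hA : {l ∈ Npart r i 1 | 1 ≤ l.2.2.1}.ncard =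
      (if 2 ≤ i then (Npart r (i - 2) 0).ncard else 0) := by
    by_cases hi : 2 ≤ i
    · rw [if_pos hi]
      have himg : {l ∈ Npart r i 1 | 1 ≤ l.2.2.1} = shift3 '' Npart r (i-2) 0 := by
        ext ⟨a,b,c,d,e⟩
        simp only [Npart, Nset, Set.mem_setOf_eq, Set.mem_sep_iff, Set.mem_image,
          shift3, Prod.mk.injEq, Prod.exists]
        constructor
        · rintro ⟨⟨⟨heq, ha, hb⟩, hpar⟩, hc⟩
          refine ⟨a, b, c - 1, d, e, ⟨⟨?_, ha, hb⟩, ?_⟩, rfl, rfl, by omega, rfl, rfl⟩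
          · revert heq
            generalize (r+1)/2 * a = t1
            generalize (r-1)/2 * b = t2
            generalize r * e = t5
            intro heq
            omega
          · omega
        · rintro ⟨x1, x2, x3, x4, x5, ⟨⟨heq, ha, hb⟩, hpar⟩, rfl, rfl, hc, rfl, rfl⟩
          subst hc
          refine ⟨⟨⟨?_, ha, hb⟩, by omega⟩, by omega⟩
          revert heq
          generalize (r+1)/2 * x1 = t1
          generalize (r-1)/2 * x2 = t2
          generalize r * x5 = t5
          intro heq
          omega
      rw [himg, Set.ncard_image_of_injective _ shift3_inj]
    · rw [if_neg hi]
      have hempty : {l ∈ Npart r i 1 | 1 ≤ l.2.2.1} = ∅ := by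
        ext ⟨a,b,c,d,e⟩
        simp only [Npart, Nset, Set.mem_setOf_eq, Set.mem_sep_iff, Set.mem_empty_iff_false,
          iff_false]
        rintro ⟨⟨⟨heq, ha, hb⟩, hpar⟩, hc⟩
        revert heq
        generalize (r+1)/2 * a = t1
        generalize (r-1)/2 * b = t2
        generalize r * e = t5
        intro heq
        omega
      rw [hempty, Set.ncard_empty]
  omega
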